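/- Let N ≥ 2, T ≥ 1, and set β = max{1/2, 1 − √((log N)/T)}. Then for any sequence of binary losses l_{t,i} ∈ {0,1}, the cumulative expected loss of the Randomized Weighted-Majority algorithm satisfies 𝓛_T ≤ 𝓛_T^min + 2·√(T · log N). -/

import Mathlib

open Finset Real

/-- Weight of expert `i` in the Randomized Weighted-Majority algorithm.
Rounds are indexed starting from `0`, so `rwmWeight β l i t` is the weight
`w_{t+1, i}` of the paper: the initial weight (`t = 0`) is `1`, and the weight is
multiplied by `β` each time the expert incurs a loss of `1`. -/
noncomputable def rwmWeight (β : ℝ) (l : ℕ → ℕ → ℝ) (i : ℕ) : ℕ → ℝ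
  | 0 => 1
  | t + 1 => if l t i = 1 then β * rwmWeight β l i t else rwmWeight β l i t

/-- Total weight `W_{t+1} = ∑_{i=1}^N w_{t+1, i}`. -/
noncomputable def rwmTotalWeight (β : ℝ) (l : ℕ → ℕ → ℝ) (N t : ℕ) : ℝ :=
  ∑ i ∈ Finset.range N, rwmWeight β l i t

/-- Expected loss of the RWM algorithm at round `t`:
`L_t = ∑_{i=1}^N p_{t,i} l_{t,i}` with `p_{t,i} = w_{t,i} / W_t`. -/
noncomputable def rwmRoundLoss (β : ℝ) (l : ℕ → ℕ → ℝ) (N t : ℕ) : ℝ :=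
  ∑ i ∈ Finset.range N, (rwmWeight β l i t / rwmTotalWeight β l N t) * l t i

/-- Cumulative expected loss `𝓛_T = ∑_{t=1}^T L_t` of the RWM algorithm. -/
noncomputable def rwmCumLoss (β : ℝ) (l : ℕ → ℕ → ℝ) (N T : ℕ) : ℝ :=
  ∑ t ∈ Finset.range T, rwmRoundLoss β l N t

/-- Cumulative loss `𝓛_{T,i} = ∑_{t=1}^T l_{t,i}` of expert `i`. -/
noncomputable def rwmExpertLoss (l : ℕ → ℕ → ℝ) (i T : ℕ) : ℝ :=
  ∑ t ∈ Finset.range T, l t i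

/-!
The total weight `W_t` shrinks by the factor `1 - (1 - β) L_t ≤ exp (-(1 - β) L_t)`
in each round, so `W_T ≤ N exp (-(1 - β) 𝓛_T)`, while `W_T` is at least the weight
`β ^ 𝓛_{T,i}` of any single expert. Taking logarithms and using `-log (1 - η) ≤ η + η²` for
`η = 1 - β ≤ 1/2` gives `𝓛_T ≤ 𝓛_{T,i} + η T + (log N) / η`, which is `𝓛_{T,i} + 2 √(T log N)`
at `η = √((log N) / T)`. When that `η` exceeds `1/2`, `β = 1/2` and the trivial bound
`𝓛_T ≤ T < 2 √(T log N)` suffices.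
-/

theorem neg_log_one_sub_le_self_add_sq {x : ℝ} (h0 : 0 ≤ x) (h2 : x ≤ 1 / 2) :
    -log (1 - x) ≤ x + x ^ 2 := by
  -- Taylor polynomial of degree 4, with the tail `x⁵ / (1 - x) ≤ 2 x⁵` absorbed into `x²/2`
  have h := abs_log_sub_add_sum_range_le (show |x| < 1 by rw [abs_of_nonneg h0]; linarith) 4
  simp only [abs_of_nonneg h0, sum_range_succ, sum_range_zero] at h
  have htail : x ^ 5 / (1 - x) ≤ 2 * x ^ 5 := by
    rw [div_le_iff₀ (by linarith)]; nlinarith [pow_nonneg h0 5]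
  have := (abs_le.mp h).1
  norm_num at this
  nlinarith [pow_nonneg h0 3, pow_nonneg h0 4, pow_nonneg h0 5]

theorem mem_Icc_of_eq_zero_or_eq_one {x : ℝ} (h : x = 0 ∨ x = 1) : x ∈ Set.Icc (0 : ℝ) 1 := by
  rcases h with rfl | rfl <;> norm_num

section RWM

variable {β : ℝ} {l : ℕ → ℕ → ℝ} {N T : ℕ}

theorem rwmWeight_pos (hβ : 0 < β) (i t : ℕ) : 0 < rwmWeight β l i t := by
  induction t with
  | zero => exact one_pos
  | succ t ih => rw [rwmWeight]; split_ifs; exacts [mul_pos hβ ih, ih]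

theorem rwmTotalWeight_pos (hβ : 0 < β) (hN : 0 < N) (t : ℕ) : 0 < rwmTotalWeight β l N t :=
  sum_pos (fun i _ => rwmWeight_pos hβ i t) (nonempty_range_iff.mpr hN.ne')

theorem rwmWeight_succ_of_binary {i t : ℕ} (h : l t i = 0 ∨ l t i = 1) :
    rwmWeight β l i (t + 1) = rwmWeight β l i t * (1 - (1 - β) * l t i) := by
  rcases h with h | h <;> simp [rwmWeight, h, mul_comm]

theorem rwmExpertLoss_succ (i t : ℕ) :
    rwmExpertLoss l i (t + 1) = rwmExpertLoss l i t + l t i :=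
  sum_range_succ _ _

theorem rwmCumLoss_succ (t : ℕ) :
    rwmCumLoss β l N (t + 1) = rwmCumLoss β l N t + rwmRoundLoss β l N t :=
  sum_range_succ _ _

theorem rwmWeight_eq_exp (hβ : 0 < β) {i t : ℕ} (hl : ∀ s < t, l s i = 0 ∨ l s i = 1) :
    rwmWeight β l i t = exp (rwmExpertLoss l i t * log β) := by
  induction t with
  | zero => simp [rwmWeight, rwmExpertLoss]
  | succ t ih =>
    rw [rwmWeight_succ_of_binary (hl t t.lt_succ_self), ih fun s hs => hl s (by omega),
      rwmExpertLoss_succ, add_mul, exp_add]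
    rcases hl t t.lt_succ_self with h | h <;> simp [h, exp_log hβ]

theorem rwmTotalWeight_succ (hβ : 0 < β) (hN : 0 < N) {t : ℕ}
    (hl : ∀ i < N, l t i = 0 ∨ l t i = 1) :
    rwmTotalWeight β l N (t + 1) =
      rwmTotalWeight β l N t * (1 - (1 - β) * rwmRoundLoss β l N t) := by
  have hW := (rwmTotalWeight_pos (l := l) hβ hN t).ne'
  have hweighted : rwmTotalWeight β l N t * rwmRoundLoss β l N t =
      ∑ i ∈ range N, rwmWeight β l i t * l t i := by
    rw [rwmRoundLoss, mul_sum]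
    exact sum_congr rfl fun i _ => by field_simp
  rw [mul_sub, mul_one, mul_left_comm, hweighted, mul_sum]
  unfold rwmTotalWeight
  rw [← sum_sub_distrib]
  exact sum_congr rfl fun i hi => by
    rw [rwmWeight_succ_of_binary (hl i (mem_range.mp hi))]; ring

theorem rwmTotalWeight_le_mul_exp (hβ : 0 < β) (hN : 0 < N)
    (hl : ∀ t < T, ∀ i < N, l t i = 0 ∨ l t i = 1) :
    rwmTotalWeight β l N T ≤ N * exp (-((1 - β) * rwmCumLoss β l N T)) := by
  induction T with
  | zero => simp [rwmTotalWeight, rwmCumLoss, rwmWeight]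
  | succ T ih =>
    set y := (1 - β) * rwmRoundLoss β l N T
    calc rwmTotalWeight β l N (T + 1) = rwmTotalWeight β l N T * (1 - y) :=
          rwmTotalWeight_succ hβ hN (hl T T.lt_succ_self)
      _ ≤ rwmTotalWeight β l N T * exp (-y) :=
          mul_le_mul_of_nonneg_left (by linarith [add_one_le_exp (-y)])
            (rwmTotalWeight_pos hβ hN T).le
      _ ≤ N * exp (-((1 - β) * rwmCumLoss β l N T)) * exp (-y) :=
          mul_le_mul_of_nonneg_right (ih fun t ht => hl t (by omega)) (exp_pos _).le
      _ = N * exp (-((1 - β) * rwmCumLoss β l N (T + 1))) := by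
          rw [rwmCumLoss_succ, mul_assoc, ← exp_add, mul_add, neg_add]

theorem rwmExpertLoss_mul_log_le (hβ : 0 < β) (hN : 0 < N)
    (hl : ∀ t < T, ∀ i < N, l t i = 0 ∨ l t i = 1) {i : ℕ} (hi : i < N) :
    rwmExpertLoss l i T * log β ≤ log N - (1 - β) * rwmCumLoss β l N T := by
  have hle : rwmWeight β l i T ≤ N * exp (-((1 - β) * rwmCumLoss β l N T)) :=
    (single_le_sum (f := fun j => rwmWeight β l j T) (fun j _ => (rwmWeight_pos hβ j T).le)
      (mem_range.mpr hi)).trans (rwmTotalWeight_le_mul_exp hβ hN hl)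
  rw [rwmWeight_eq_exp hβ fun t ht => hl t ht i hi] at hle
  have := log_le_log (exp_pos _) hle
  rwa [log_exp, log_mul (by positivity) (exp_pos _).ne', log_exp, ← sub_eq_add_neg] at this

theorem rwmRoundLoss_le_one (hβ : 0 < β) (hN : 0 < N) {t : ℕ} (hl : ∀ i < N, l t i ≤ 1) :
    rwmRoundLoss β l N t ≤ 1 := by
  have hW := rwmTotalWeight_pos (l := l) hβ hN t
  calc rwmRoundLoss β l N t ≤ ∑ i ∈ range N, rwmWeight β l i t / rwmTotalWeight β l N t :=
        sum_le_sum fun i hi => mul_le_of_le_one_right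
          (div_nonneg (rwmWeight_pos hβ i t).le hW.le) (hl i (mem_range.mp hi))
    _ = 1 := by rw [← sum_div, ← rwmTotalWeight, div_self hW.ne']

theorem rwmCumLoss_le (hβ : 0 < β) (hN : 0 < N) (hl : ∀ t < T, ∀ i < N, l t i ≤ 1) :
    rwmCumLoss β l N T ≤ T := by
  simpa [rwmCumLoss] using
    sum_le_sum fun t ht => rwmRoundLoss_le_one hβ hN (hl t (mem_range.mp ht))

theorem rwmExpertLoss_nonneg {i : ℕ} (hl : ∀ t < T, 0 ≤ l t i) : 0 ≤ rwmExpertLoss l i T :=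
  sum_nonneg fun t ht => hl t (mem_range.mp ht)

theorem rwmExpertLoss_le {i : ℕ} (hl : ∀ t < T, l t i ≤ 1) : rwmExpertLoss l i T ≤ T := by
  simpa [rwmExpertLoss] using sum_le_sum fun t ht => hl t (mem_range.mp ht)

theorem rwmCumLoss_one_sub_le_expertLoss_add (hN : 0 < N) {η : ℝ} (hη : 0 < η) (hη2 : η ≤ 1 / 2)
    (hl : ∀ t < T, ∀ i < N, l t i = 0 ∨ l t i = 1) {i : ℕ} (hi : i < N) :
    rwmCumLoss (1 - η) l N T ≤ rwmExpertLoss l i T + η * T + log N / η := by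
  have hbin : ∀ t < T, l t i = 0 ∨ l t i = 1 := fun t ht => hl t ht i hi
  have hE0 := rwmExpertLoss_nonneg fun t ht => (mem_Icc_of_eq_zero_or_eq_one (hbin t ht)).1
  have hET := rwmExpertLoss_le fun t ht => (mem_Icc_of_eq_zero_or_eq_one (hbin t ht)).2
  have hlog := rwmExpertLoss_mul_log_le (β := 1 - η) (by linarith) hN hl hi
  have hlogβ := mul_le_mul_of_nonneg_left (neg_log_one_sub_le_self_add_sq hη.le hη2) hE0
  have hET2 := mul_le_mul_of_nonneg_right hET (sq_nonneg η)
  rw [sub_sub_cancel] at hlog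
  have hscaled : (rwmCumLoss (1 - η) l N T - rwmExpertLoss l i T - η * T) * η ≤ log N := by
    linarith
  linarith [(le_div_iff₀ hη).mpr hscaled]

end RWM

/-- for `N ≥ 2`, `T ≥ 1` and `β = max {1/2, 1 − √((log N)/T)}`,
`𝓛_T ≤ 𝓛_T^min + 2 √(T log N)` for any binary losses. -/
theorem rwm_optimized_loss_bound (N T : ℕ) (hN : 2 ≤ N) (hT : 1 ≤ T)
    (β : ℝ) (hβ : β = max (1 / 2) (1 - Real.sqrt (Real.log N / T)))
    (l : ℕ → ℕ → ℝ) (hl : ∀ t < T, ∀ i < N, l t i = 0 ∨ l t i = 1) :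
    rwmCumLoss β l N T ≤
      (Finset.range N).inf' (Finset.nonempty_range_iff.mpr (by omega))
          (fun i => rwmExpertLoss l i T)
        + 2 * Real.sqrt (T * Real.log N) := by
  obtain ⟨i, hi, hmin⟩ := exists_mem_eq_inf' (nonempty_range_iff.mpr (by omega : N ≠ 0))
    (fun i => rwmExpertLoss l i T)
  rw [hmin]
  replace hi := mem_range.mp hi
  have hN0 : 0 < N := by omega
  have hlogN : 0 < log N := log_pos (by exact_mod_cast hN)
  have hT0 : (0 : ℝ) < T := by exact_mod_cast hT
  set η := sqrt (log N / T)
  have hη : 0 < η := sqrt_pos.mpr (by positivity)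
  have hlogN_eq : log N = η ^ 2 * T := by rw [sq_sqrt (by positivity)]; field_simp
  have hsqrt : sqrt (T * log N) = η * T := by
    rw [hlogN_eq, show (T : ℝ) * (η ^ 2 * T) = (η * T) ^ 2 by ring, sqrt_sq (by positivity)]
  rcases le_or_gt η (1 / 2) with hη2 | hη2
  · rw [hβ, max_eq_right (by linarith)]
    calc rwmCumLoss (1 - η) l N T ≤ rwmExpertLoss l i T + η * T + log N / η :=
          rwmCumLoss_one_sub_le_expertLoss_add hN0 hη hη2 hl hi
      _ = rwmExpertLoss l i T + 2 * sqrt (T * log N) := by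
          rw [hsqrt, hlogN_eq]; field_simp; ring
  · have hβ2 : β = 1 / 2 := by rw [hβ, max_eq_left (by linarith)]
    have hE0 := rwmExpertLoss_nonneg fun t ht => (mem_Icc_of_eq_zero_or_eq_one (hl t ht i hi)).1
    calc rwmCumLoss β l N T ≤ T :=
          rwmCumLoss_le (by rw [hβ2]; norm_num) hN0
            fun t ht j hj => (mem_Icc_of_eq_zero_or_eq_one (hl t ht j hj)).2
      _ ≤ rwmExpertLoss l i T + 2 * sqrt (T * log N) := by rw [hsqrt]; nlinarith
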